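/- Let A ∈ C^{[m,n]} with n ≥ 2 and S a nonempty proper subset of N = {1,…,n}. Every eigenvalue of A lies in K^S(A) = (⋃_{i∈S, j∈S̄} K_{i,j}(A)) ∪ (⋃_{i∈S̄, j∈S} K_{i,j}(A)), where K_{i,j}(A) = {z ∈ ℂ : (|z - a_{i…i}| - r_i^j(A))|z - a_{j…j}| ≤ |a_{ij…j}| r_j(A)}. -/

import Mathlib

open Finset

/-- off-diagonal row sum r_i(A) for a complex tensor of order k+1, dimension n -/
noncomputable def rT {n k : ℕ} (A : (Fin (k+1) → Fin n) → ℂ) (i : Fin n) : ℝ :=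
  ∑ α ∈ Finset.univ.filter (fun α : Fin k → Fin n => α ≠ fun _ => i),
    norm (A (Fin.cons i α))

/-- r_i^j(A) = r_i(A) - |a_{ij...j}| -/
noncomputable def rTj {n k : ℕ} (A : (Fin (k+1) → Fin n) → ℂ) (i j : Fin n) : ℝ :=
  rT A i - norm (A (Fin.cons i fun _ => j))

/-- r_j^{Δ^S}(A): sum over index tuples all lying in S, excluding the diagonal tuple -/
noncomputable def rDelta {n k : ℕ} (A : (Fin (k+1) → Fin n) → ℂ) (S : Finset (Fin n))
    (j : Fin n) : ℝ :=
  ∑ α ∈ Finset.univ.filter (fun α : Fin k → Fin n => (∀ l, α l ∈ S) ∧ α ≠ fun _ => j),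
    norm (A (Fin.cons j α))

/-- r_j^{Δ^S-complement}(A): sum over index tuples not all lying in S -/
noncomputable def rDeltaC {n k : ℕ} (A : (Fin (k+1) → Fin n) → ℂ) (S : Finset (Fin n))
    (j : Fin n) : ℝ :=
  ∑ α ∈ Finset.univ.filter (fun α : Fin k → Fin n => ¬ (∀ l, α l ∈ S)),
    norm (A (Fin.cons j α))

/-- λ is an eigenvalue of the tensor A: A x^{m-1} = λ x^{[m-1]} for some nonzero x -/
def IsEig {n k : ℕ} (A : (Fin (k+1) → Fin n) → ℂ) (lam : ℂ) : Prop :=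
  ∃ x : Fin n → ℂ, x ≠ 0 ∧ ∀ i,
    (∑ α : Fin k → Fin n, A (Fin.cons i α) * ∏ l, x (α l)) = lam * (x i) ^ k

lemma keylem {n k : ℕ} (A : (Fin (k+1) → Fin n) → ℂ) (lam : ℂ) (x : Fin n → ℂ)
    (heig : ∀ p, (∑ α : Fin k → Fin n, A (Fin.cons p α) * ∏ l, x (α l)) = lam * (x p) ^ k)
    (i j : Fin n) (hk : k ≠ 0) (hij : i ≠ j)
    (hmax : ∀ t, norm (x t) ≤ norm (x i))
    (hpos : 0 < norm (x i)) :
    (norm (lam - A (fun _ => i)) - rTj A i j) * norm (lam - A (fun _ => j)) ≤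
      norm (A (Fin.cons i fun _ => j)) * rT A j := by
  have habs : ∀ (α : Fin k → Fin n), ∏ l, norm (x (α l)) ≤ norm (x i) ^ k := by
    intro α
    calc ∏ l, norm (x (α l)) ≤ ∏ _l : Fin k, norm (x i) :=
          Finset.prod_le_prod (fun _ _ => norm_nonneg _) (fun l _ => hmax (α l))
      _ = norm (x i) ^ k := by simp
  have hsplit : ∀ p : Fin n, (lam - A (fun _ => p)) * (x p)^k
      = ∑ α ∈ univ.filter (fun α : Fin k → Fin n => α ≠ fun _ => p),
          A (Fin.cons p α) * ∏ l, x (α l) := by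
    intro p
    have h1 : (Finset.univ : Finset (Fin k → Fin n))
        = insert (fun _ => p) (univ.filter (fun α => α ≠ fun _ => p)) := by
      ext α
      simp only [mem_univ, mem_insert, mem_filter, true_and, true_iff]
      exact eq_or_ne α _
    have h2 := heig p
    rw [h1, Finset.sum_insert (by simp)] at h2
    have hc : (Fin.cons p (fun _ => p) : Fin (k+1) → Fin n) = fun _ => p := by
      funext l
      induction l using Fin.cases <;> simp
    rw [hc] at h2
    simp only [Finset.prod_const, Finset.card_univ, Fintype.card_fin] at h2
    linear_combination -h2
  have hbound : ∀ (p : Fin n) (T : Finset (Fin k → Fin n)),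
      norm (∑ α ∈ T, A (Fin.cons p α) * ∏ l, x (α l))
        ≤ (∑ α ∈ T, norm (A (Fin.cons p α))) * norm (x i) ^ k := by
    intro p T
    calc norm (∑ α ∈ T, A (Fin.cons p α) * ∏ l, x (α l))
        ≤ ∑ α ∈ T, norm (A (Fin.cons p α) * ∏ l, x (α l)) :=
          norm_sum_le _ _
      _ ≤ ∑ α ∈ T, norm (A (Fin.cons p α)) * norm (x i) ^ k := by
          refine Finset.sum_le_sum fun α _ => ?_
          rw [norm_mul, norm_prod]
          exact mul_le_mul_of_nonneg_left (habs α) (norm_nonneg _)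
      _ = _ := by rw [← Finset.sum_mul]
  have hj : norm (lam - A (fun _ => j)) * norm (x j) ^ k
      ≤ rT A j * norm (x i) ^ k := by
    calc norm (lam - A (fun _ => j)) * norm (x j) ^ k
        = norm ((lam - A (fun _ => j)) * (x j)^k) := by rw [norm_mul, norm_pow]
      _ = norm (∑ α ∈ univ.filter (fun α : Fin k → Fin n => α ≠ fun _ => j),
            A (Fin.cons j α) * ∏ l, x (α l)) := by rw [hsplit j]
      _ ≤ (∑ α ∈ univ.filter (fun α : Fin k → Fin n => α ≠ fun _ => j),
            norm (A (Fin.cons j α))) * norm (x i) ^ k := hbound j _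
      _ = rT A j * norm (x i) ^ k := by rw [rT]
  have hne : (fun _ : Fin k => j) ≠ (fun _ => i) := by
    intro h
    exact hij (congrFun h ⟨0, Nat.pos_of_ne_zero hk⟩).symm
  have hset : (univ.filter (fun α : Fin k → Fin n => α ≠ fun _ => i))
      = insert (fun _ => j) (univ.filter (fun α => α ≠ (fun _ => i) ∧ α ≠ fun _ => j)) := by
    ext α
    simp only [mem_filter, mem_univ, true_and, mem_insert]
    constructor
    · intro h
      rcases eq_or_ne α (fun _ => j) with h' | h'
      · exact Or.inl h'
      · exact Or.inr ⟨h, h'⟩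
    · rintro (rfl | ⟨h, -⟩)
      · exact hne
      · exact h
  have hrTj : rTj A i j
      = ∑ α ∈ univ.filter (fun α : Fin k → Fin n => α ≠ (fun _ => i) ∧ α ≠ fun _ => j),
        norm (A (Fin.cons i α)) := by
    rw [rTj, rT, hset, Finset.sum_insert (by simp)]
    ring
  have hi' : (norm (lam - A (fun _ => i)) - rTj A i j) * norm (x i) ^ k
      ≤ norm (A (Fin.cons i fun _ => j)) * norm (x j) ^ k := by
    have e2 := hsplit i
    rw [hset, Finset.sum_insert (by simp)] at e2
    have e3 : norm ((lam - A (fun _ => i)) * (x i)^k)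
        ≤ norm (A (Fin.cons i fun _ => j)) * norm (x j)^k
          + rTj A i j * norm (x i)^k := by
      rw [e2]
      refine (norm_add_le _ _).trans (add_le_add ?_ ?_)
      · apply le_of_eq
        rw [norm_mul, norm_prod]
        simp
      · rw [hrTj]
        exact hbound i _
    rw [norm_mul, norm_pow] at e3
    nlinarith [e3]
  refine le_of_mul_le_mul_right ?_ (pow_pos hpos k)
  calc (norm (lam - A (fun _ => i)) - rTj A i j) * norm (lam - A (fun _ => j))
        * norm (x i) ^ k
      = norm (lam - A (fun _ => j))
        * ((norm (lam - A (fun _ => i)) - rTj A i j) * norm (x i) ^ k) := by ring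
    _ ≤ norm (lam - A (fun _ => j))
        * (norm (A (Fin.cons i fun _ => j)) * norm (x j) ^ k) :=
        mul_le_mul_of_nonneg_left hi' (norm_nonneg _)
    _ = norm (A (Fin.cons i fun _ => j))
        * (norm (lam - A (fun _ => j)) * norm (x j) ^ k) := by ring
    _ ≤ norm (A (Fin.cons i fun _ => j)) * (rT A j * norm (x i) ^ k) :=
        mul_le_mul_of_nonneg_left hj (norm_nonneg _)
    _ = norm (A (Fin.cons i fun _ => j)) * rT A j * norm (x i) ^ k := by ring

theorem stmt5 {n k : ℕ} (hn : 2 ≤ n) (A : (Fin (k+1) → Fin n) → ℂ)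
    (S : Finset (Fin n)) (hS : S.Nonempty) (hS' : S ≠ Finset.univ) (lam : ℂ)
    (h : IsEig A lam) :
    ∃ i j : Fin n, ((i ∈ S ∧ j ∈ Sᶜ) ∨ (i ∈ Sᶜ ∧ j ∈ S)) ∧
      (norm (lam - A (fun _ => i)) - rTj A i j) * norm (lam - A (fun _ => j)) ≤
        norm (A (Fin.cons i fun _ => j)) * rT A j := by
  obtain ⟨x, hx0, heig⟩ := h
  obtain ⟨jc, hjc⟩ : ∃ jc, jc ∉ S := by
    by_contra hco
    push_neg at hco
    exact hS' (Finset.eq_univ_iff_forall.2 hco)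
  obtain ⟨is, his⟩ := hS
  rcases Nat.eq_zero_or_pos k with hk | hk
  · -- k = 0 : lam equals every diagonal entry and all row sums vanish
    subst hk
    refine ⟨is, jc, Or.inl ⟨his, Finset.mem_compl.2 hjc⟩, ?_⟩
    have hrT : rT A jc = 0 := by
      rw [rT]
      have : (univ.filter (fun α : Fin 0 → Fin n => α ≠ fun _ => jc)) = ∅ := by
        ext α
        simp [Subsingleton.elim α (fun _ => jc)]
      rw [this, Finset.sum_empty]
    have hlam : lam = A (fun _ => jc) := by
      have h2 := heig jc
      have hc : (Fin.cons jc (fun _ => jc) : Fin 1 → Fin n) = fun _ => jc := by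
        funext l
        induction l using Fin.cases <;> simp
      have h3 : (Fin.cons jc (default : Fin 0 → Fin n) : Fin 1 → Fin n) = fun _ => jc := by
        rw [Subsingleton.elim (default : Fin 0 → Fin n) (fun _ => jc)]
        exact hc
      simp at h2
      rw [h3] at h2
      exact h2.symm
    rw [hrT, hlam]
    simp
  · -- k ≥ 1 : main case
    obtain ⟨i, -, hi⟩ := Finset.exists_max_image Finset.univ
      (fun t => norm (x t)) ⟨is, Finset.mem_univ is⟩
    have hmax : ∀ t, norm (x t) ≤ norm (x i) := fun t => hi t (Finset.mem_univ t)
    have hpos : 0 < norm (x i) := by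
      obtain ⟨t, ht⟩ := Function.ne_iff.1 hx0
      exact lt_of_lt_of_le (by simpa using ht) (hmax t)
    by_cases hiS : i ∈ S
    · refine ⟨i, jc, Or.inl ⟨hiS, Finset.mem_compl.2 hjc⟩, ?_⟩
      exact keylem A lam x heig i jc (Nat.pos_iff_ne_zero.1 hk) (fun he => hjc (he ▸ hiS)) hmax hpos
    · refine ⟨i, is, Or.inr ⟨Finset.mem_compl.2 hiS, his⟩, ?_⟩
      exact keylem A lam x heig i is (Nat.pos_iff_ne_zero.1 hk) (fun he => hiS (he ▸ his)) hmax hpos
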